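/- Let X be a Banach space and {T(t)}_{t≥0} an operator semigroup on X (i.e. T(0) = I and T(t)T(s) = T(t+s)) consisting of bounded operators with ‖T(t)‖ uniformly bounded on bounded intervals. If lim_{t→0+} T(t)x = x weakly in X for each x ∈ X, then {T(t)}_{t≥0} is a C0-semigroup, i.e. lim_{t→0+} T(t)x = x strongly for each x ∈ X. -/

import Mathlib

/-!
Weak right-continuity of the orbit `t ↦ T t x` makes it weakly measurable with separable range
(its values lie in the closed span of its values at rational times), hence Bochner integrable on
bounded intervals by Pettis's theorem. The averages `r⁻¹ ∫₀ʳ T t x` are strongly continuous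
vectors, since `T h` shifts the interval of integration by `h`, and they converge weakly to `x`
as `r → 0⁺`. Strongly continuous vectors form a closed subspace (by the uniform bound on
`‖T t‖`), and a closed subspace is weakly closed, so it contains `x`.
-/

open Filter Topology MeasureTheory Set TopologicalSpace

section WeakClosure

variable {E : Type*} [AddCommGroup E] [Module ℝ E] [TopologicalSpace E] [IsTopologicalAddGroup E]
  [ContinuousSMul ℝ E] [LocallyConvexSpace ℝ E]

theorem Convex.mem_closure_of_forall_tendsto_dual {ι : Type*} {l : Filter ι} [l.NeBot]
    {s : Set E} (hs : Convex ℝ s) {g : ι → E} {x : E} (hgs : ∀ᶠ i in l, g i ∈ s)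
    (hgx : ∀ f : StrongDual ℝ E, Tendsto (fun i => f (g i)) l (𝓝 (f x))) : x ∈ closure s := by
  by_contra hx
  obtain ⟨f, u, hfx, hfs⟩ := geometric_hahn_banach_point_closed hs.closure isClosed_closure hx
  exact hfx.not_ge <| ge_of_tendsto (hgx f) <| hgs.mono fun i hi => (hfs _ (subset_closure hi)).le

end WeakClosure

theorem measurable_of_measurable_dist {α β : Type*} [MeasurableSpace α] [PseudoMetricSpace β]
    [SecondCountableTopology β] [MeasurableSpace β] [BorelSpace β] {f : α → β}
    (hf : ∀ c, Measurable fun a => dist (f a) c) : Measurable f := by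
  refine measurable_of_isOpen fun U hU => ?_
  choose r hr hrU using fun y : U => Metric.isOpen_iff.1 hU y y.2
  obtain ⟨S, hSc, hSU⟩ :=
    isOpen_iUnion_countable (fun y : U => Metric.ball (y : β) (r y)) fun _ => Metric.isOpen_ball
  have hU : U = ⋃ y ∈ S, Metric.ball (y : β) (r y) := by
    rw [hSU]
    exact Subset.antisymm (fun y hy => mem_iUnion.2 ⟨⟨y, hy⟩, Metric.mem_ball_self (hr _)⟩)
      (iUnion_subset hrU)
  rw [hU, preimage_iUnion₂]
  exact .biUnion hSc fun y _ => measurableSet_lt (hf y) measurable_const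

theorem measurable_of_continuousWithinAt_Ici {β : Type*} [TopologicalSpace β]
    [PseudoMetrizableSpace β] [MeasurableSpace β] [BorelSpace β] {g : ℝ → β}
    (hg : ∀ s, ContinuousWithinAt g (Ici s) s) : Measurable g := by
  -- `g ∘ φ n` factors through `ℤ`, and `φ n s ↓ s`.
  set φ : ℕ → ℝ → ℝ := fun n s => (⌈s * (n + 1)⌉ : ℝ) / (n + 1)
  have hφ : ∀ s, Tendsto (fun n => φ n s) atTop (𝓝[≥] s) := by
    intro s
    have hge : ∀ n : ℕ, s ≤ φ n s := fun n => by
      rw [le_div_iff₀ (by positivity)]; exact Int.le_ceil _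
    have hle : ∀ n : ℕ, φ n s ≤ s + 1 / (n + 1) := fun n => by
      rw [div_le_iff₀ (by positivity), add_mul, one_div_mul_cancel (by positivity)]
      exact (Int.ceil_lt_add_one _).le
    refine tendsto_nhdsWithin_iff.2 ⟨?_, Eventually.of_forall hge⟩
    refine tendsto_of_tendsto_of_tendsto_of_le_of_le tendsto_const_nhds ?_ hge hle
    simpa using (tendsto_const_nhds (x := s)).add tendsto_one_div_add_atTop_nhds_zero_nat
  refine measurable_of_tendsto_metrizable (f := fun n s => g (φ n s)) (fun n => ?_)
    (tendsto_pi_nhds.2 fun s => (hg s).tendsto.comp (hφ s))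
  exact (measurable_from_top (f := fun k : ℤ => g (k / (n + 1)))).comp
    (measurable_id.mul_const _).ceil

section Pettis

variable {X : Type*} [NormedAddCommGroup X] [NormedSpace ℝ X]

theorem TopologicalSpace.IsSeparable.exists_norming_seq {s : Set X} (hs : IsSeparable s) :
    ∃ g : ℕ → StrongDual ℝ X, ∀ z ∈ s, ‖z‖ = ⨆ n, g n z := by
  obtain ⟨d, hdc, hsd⟩ := hs
  obtain ⟨u, hu⟩ := (hdc.insert 0).exists_eq_range (insert_nonempty 0 d)
  choose g hg_norm hg_eval using fun n => exists_dual_vector'' ℝ (u n)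
  refine ⟨g, fun z hz => ?_⟩
  have hle : ∀ n, g n z ≤ ‖z‖ := fun n =>
    (le_abs_self _).trans (by simpa using (g n).le_of_opNorm_le (hg_norm n) z)
  have hbdd : BddAbove (range fun n => g n z) := ⟨‖z‖, forall_mem_range.2 hle⟩
  refine le_antisymm (le_of_forall_pos_lt_add fun ε hε => ?_) (ciSup_le hle)
  have hz' : z ∈ closure (range u) := hu ▸ closure_mono (subset_insert 0 d) (hsd hz)
  obtain ⟨_, ⟨n, rfl⟩, hn⟩ := Metric.mem_closure_iff.1 hz' (ε / 2) (half_pos hε)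
  rw [dist_eq_norm] at hn
  have hgn : g n (u n - z) ≤ ‖z - u n‖ := by
    rw [norm_sub_rev]
    exact (le_abs_self _).trans (by simpa using (g n).le_of_opNorm_le (hg_norm n) (u n - z))
  calc ‖z‖ ≤ ‖u n‖ + ‖z - u n‖ := norm_le_insert' _ _
    _ = g n z + g n (u n - z) + ‖z - u n‖ := by
        rw [map_sub, hg_eval, RCLike.ofReal_real_eq_id, id]; ring
    _ < g n z + ε := by linarith
    _ ≤ (⨆ n, g n z) + ε := by gcongr; exact le_ciSup hbdd n

theorem stronglyMeasurable_of_measurable_dual {α : Type*} [MeasurableSpace α] {F : α → X}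
    (hsep : IsSeparable (range F)) (hF : ∀ f : StrongDual ℝ X, Measurable fun a => f (F a)) :
    StronglyMeasurable F := by
  set M := Submodule.span ℝ (range F)
  have hM : IsSeparable (M : Set X) := hsep.span
  obtain ⟨g, hg⟩ := hM.exists_norming_seq
  have : SeparableSpace (M : Set X) := hM.separableSpace
  let _ : MeasurableSpace (M : Set X) := borel _
  have : BorelSpace (M : Set X) := ⟨rfl⟩
  set F' : α → (M : Set X) := fun a => ⟨F a, Submodule.subset_span (mem_range_self a)⟩
  have hF' : Measurable F' := measurable_of_measurable_dist fun c => by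
    have hdist : (fun a => dist (F' a) c) = fun a => ⨆ n, (g n (F a) - g n c) := by
      funext a
      rw [Subtype.dist_eq, dist_eq_norm, hg _ (M.sub_mem (F' a).2 c.2)]
      simp only [map_sub, F']
    rw [hdist]
    exact Measurable.iSup fun n => (hF (g n)).sub_const _
  exact continuous_subtype_val.comp_stronglyMeasurable hF'.stronglyMeasurable

theorem isSeparable_range_of_continuousWithinAt_Ici_dual {g : ℝ → X}
    (hg : ∀ (f : StrongDual ℝ X) s, ContinuousWithinAt (fun t => f (g t)) (Ici s) s) :
    IsSeparable (range g) := by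
  set M := Submodule.span ℝ (g '' range ((↑) : ℚ → ℝ))
  have hM : IsSeparable (closure (M : Set X)) :=
    ((countable_range _).image g).isSeparable.span.closure
  refine hM.mono (range_subset_iff.2 fun u => ?_)
  obtain ⟨q, -, hq_mem, hq⟩ := Dense.exists_seq_strictAnti_tendsto Rat.denseRange_cast u
  refine M.convex.mem_closure_of_forall_tendsto_dual (l := atTop) (g := fun n => g (q n))
    (Eventually.of_forall fun n => Submodule.subset_span (mem_image_of_mem g (hq_mem n).2))
    fun f => (hg f u).tendsto.comp ?_
  exact tendsto_nhdsWithin_iff.2 ⟨hq, Eventually.of_forall fun n => mem_Ici.2 (hq_mem n).1.le⟩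

theorem stronglyMeasurable_of_continuousWithinAt_Ici_dual {g : ℝ → X}
    (hg : ∀ (f : StrongDual ℝ X) s, ContinuousWithinAt (fun t => f (g t)) (Ici s) s) :
    StronglyMeasurable g :=
  stronglyMeasurable_of_measurable_dual (isSeparable_range_of_continuousWithinAt_Ici_dual hg)
    fun f => measurable_of_continuousWithinAt_Ici (hg f)

end Pettis

section Semigroup

variable {X : Type*} [NormedAddCommGroup X] [NormedSpace ℝ X] {T : ℝ → X →L[ℝ] X}

def strongContinuitySubmodule (T : ℝ → X →L[ℝ] X) : Submodule ℝ X where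
  carrier := {x | Tendsto (fun t => T t x) (𝓝[>] 0) (𝓝 x)}
  add_mem' {x y} hx hy := by simpa only [mem_ofPred_eq, map_add] using hx.add hy
  zero_mem' := by simpa only [mem_ofPred_eq, map_zero] using tendsto_const_nhds
  smul_mem' c x hx := by simpa only [mem_ofPred_eq, map_smul] using hx.const_smul c

theorem isClosed_strongContinuitySubmodule {C : ℝ} (hC : ∀ᶠ t in 𝓝[>] 0, ‖T t‖ ≤ C) :
    IsClosed (strongContinuitySubmodule T : Set X) := by
  refine isClosed_of_closure_subset fun p hp => Metric.tendsto_nhds.2 fun ε hε => ?_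
  set δ := ε / (2 * (|C| + 1))
  have hδ : 0 < δ := by positivity
  obtain ⟨z, hz, hpz⟩ := Metric.mem_closure_iff.1 hp δ hδ
  filter_upwards [hC, Metric.tendsto_nhds.1 hz (ε / 2) (half_pos hε)] with t htC htz
  have hTt : dist (T t p) (T t z) ≤ |C| * δ := by
    rw [dist_eq_norm, ← map_sub]
    calc ‖T t (p - z)‖ ≤ |C| * ‖p - z‖ := (T t).le_of_opNorm_le (htC.trans (le_abs_self C)) _
      _ ≤ |C| * δ := by rw [← dist_eq_norm]; gcongr
  have hεδ : (|C| + 1) * δ = ε / 2 := by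
    simp only [δ]; field_simp
  calc dist (T t p) p ≤ dist (T t p) (T t z) + dist (T t z) z + dist z p :=
        dist_triangle4 _ _ _ _
    _ < |C| * δ + ε / 2 + δ := by linarith [dist_comm z p]
    _ = ε := by linarith

/-- Clamped to `t ≥ 0` so that it is a function on all of `ℝ`; the averages only see `(0, r]`. -/
noncomputable def orbit (T : ℝ → X →L[ℝ] X) (x : X) (t : ℝ) : X := T (max t 0) x

noncomputable def orbitAverage (T : ℝ → X →L[ℝ] X) (x : X) (r : ℝ) : X :=
  r⁻¹ • ∫ t in 0..r, orbit T x t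

theorem apply_orbit (hTadd : ∀ s t : ℝ, 0 ≤ s → 0 ≤ t → T (s + t) = (T s).comp (T t))
    (x : X) {s h : ℝ} (hs : 0 ≤ s) (hh : 0 ≤ h) :
    T h (orbit T x s) = orbit T x (s + h) := by
  rw [orbit, orbit, max_eq_left hs, max_eq_left (add_nonneg hs hh), add_comm s h,
    hTadd h s hh hs, ContinuousLinearMap.comp_apply]

theorem continuousWithinAt_Ioi_dual_apply
    (hTadd : ∀ s t : ℝ, 0 ≤ s → 0 ≤ t → T (s + t) = (T s).comp (T t))
    (hweak : ∀ x (f : StrongDual ℝ X), Tendsto (fun t => f (T t x)) (𝓝[>] 0) (𝓝 (f x)))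
    (f : StrongDual ℝ X) (x : X) {s : ℝ} (hs : 0 ≤ s) :
    ContinuousWithinAt (fun t => f (T t x)) (Ioi s) s := by
  have hshift : 𝓝[>] s = map (s + ·) (𝓝[>] 0) := by rw [map_add_left_nhdsGT, add_zero]
  rw [ContinuousWithinAt, hshift, tendsto_map'_iff]
  refine (hweak (T s x) f).congr' (eventually_nhdsWithin_of_forall fun h hh => ?_)
  rw [Function.comp_apply, add_comm s h, hTadd h s (le_of_lt hh) hs,
    ContinuousLinearMap.comp_apply]

theorem continuousWithinAt_Ici_dual_orbit
    (hTadd : ∀ s t : ℝ, 0 ≤ s → 0 ≤ t → T (s + t) = (T s).comp (T t))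
    (hweak : ∀ x (f : StrongDual ℝ X), Tendsto (fun t => f (T t x)) (𝓝[>] 0) (𝓝 (f x)))
    (f : StrongDual ℝ X) (x : X) (s : ℝ) :
    ContinuousWithinAt (fun t => f (orbit T x t)) (Ici s) s := by
  have hmax : ContinuousWithinAt (fun t : ℝ => max t 0) (Ici s) s :=
    (continuous_id.max continuous_const).continuousWithinAt
  have horbit : ContinuousWithinAt (fun t => f (T t x)) (Ici (max s 0)) (max s 0) :=
    continuousWithinAt_Ioi_iff_Ici.1 (continuousWithinAt_Ioi_dual_apply hTadd hweak f x (by simp))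
  exact horbit.comp (f := fun t => max t 0) hmax fun _ ht => max_le_max_right 0 (mem_Ici.1 ht)

theorem intervalIntegrable_orbit (hbdd : ∀ b : ℝ, ∃ C : ℝ, ∀ t ∈ Icc (0 : ℝ) b, ‖T t‖ ≤ C)
    {x : X} (hx : StronglyMeasurable (orbit T x)) (a b : ℝ) :
    IntervalIntegrable (orbit T x) volume a b := by
  obtain ⟨C, hC⟩ := hbdd (max (max a b) 0)
  refine (intervalIntegrable_const (c := C * ‖x‖)).mono_fun' hx.aestronglyMeasurable
    (ae_restrict_of_forall_mem measurableSet_uIoc fun t ht => ?_)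
  exact (T _).le_of_opNorm_le (hC _ ⟨le_max_right t 0, max_le_max_right 0 ht.2⟩) x

variable [CompleteSpace X]

theorem orbitAverage_mem_strongContinuitySubmodule
    (hTadd : ∀ s t : ℝ, 0 ≤ s → 0 ≤ t → T (s + t) = (T s).comp (T t)) {x : X}
    (hint : ∀ a b, IntervalIntegrable (orbit T x) volume a b) {r : ℝ} (hr : 0 ≤ r) :
    orbitAverage T x r ∈ strongContinuitySubmodule T := by
  set Φ : ℝ → X := fun u => ∫ t in 0..u, orbit T x t
  have hshift : ∀ h, 0 ≤ h → T h (orbitAverage T x r) = r⁻¹ • (Φ (r + h) - Φ h) := by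
    intro h hh
    rw [orbitAverage, map_smul, ← (T h).intervalIntegral_comp_comm (hint 0 r)]
    congr 1
    calc ∫ t in 0..r, T h (orbit T x t) = ∫ t in 0..r, orbit T x (t + h) :=
          intervalIntegral.integral_congr fun t ht =>
            apply_orbit hTadd x (by rw [uIcc_of_le hr] at ht; exact ht.1) hh
      _ = ∫ t in h..(r + h), orbit T x t := by
          simp [intervalIntegral.integral_comp_add_right (orbit T x) h (a := 0) (b := r)]
      _ = Φ (r + h) - Φ h :=
          (intervalIntegral.integral_interval_sub_left (hint 0 _) (hint 0 _)).symm
  have hΦ : Continuous Φ := intervalIntegral.continuous_primitive hint 0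
  have hcont : Continuous fun h => r⁻¹ • (Φ (r + h) - Φ h) := by fun_prop
  have hlim := (hcont.tendsto 0).mono_left (nhdsWithin_le_nhds (s := Ioi 0))
  rw [add_zero, show Φ 0 = 0 from intervalIntegral.integral_same, sub_zero] at hlim
  exact hlim.congr' (eventually_nhdsWithin_of_forall fun h hh => (hshift h (le_of_lt hh)).symm)

theorem tendsto_dual_orbitAverage {x : X}
    (hweak : ∀ f : StrongDual ℝ X, Tendsto (fun t => f (T t x)) (𝓝[>] 0) (𝓝 (f x)))
    (hmeas : StronglyMeasurable (orbit T x))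
    (hint : ∀ a b, IntervalIntegrable (orbit T x) volume a b) (f : StrongDual ℝ X) :
    Tendsto (fun r => f (orbitAverage T x r)) (𝓝[>] 0) (𝓝 (f x)) := by
  have hderiv : HasDerivWithinAt (fun u => ∫ t in 0..u, f (orbit T x t)) (f x) (Ici 0) 0 := by
    refine intervalIntegral.integral_hasDerivWithinAt_of_tendsto_ae_right .refl
      (f.continuous.comp_stronglyMeasurable hmeas).stronglyMeasurableAtFilter
      (((hweak f).congr' ?_).mono_left inf_le_left)
    exact eventually_nhdsWithin_of_forall fun t ht => by
      simp only [orbit, max_eq_left (mem_Ioi.1 ht).le]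
  rw [← hasDerivWithinAt_Ioi_iff_Ici, hasDerivWithinAt_iff_tendsto_slope' self_notMem_Ioi]
    at hderiv
  refine hderiv.congr' (eventually_nhdsWithin_of_forall fun r _ => ?_)
  dsimp only
  rw [slope_def_field, orbitAverage, map_smul, ← f.intervalIntegral_comp_comm (hint 0 r)]
  simp [div_eq_inv_mul]

end Semigroup

theorem stmt2_general {X : Type*} [NormedAddCommGroup X] [NormedSpace ℝ X] [CompleteSpace X]
    (T : ℝ → X →L[ℝ] X)
    (hTadd : ∀ s t : ℝ, 0 ≤ s → 0 ≤ t → T (s + t) = (T s).comp (T t))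
    (hbdd : ∀ b : ℝ, ∃ C : ℝ, ∀ t ∈ Set.Icc (0 : ℝ) b, ‖T t‖ ≤ C)
    (hweak : ∀ x : X, ∀ f : X →L[ℝ] ℝ,
        Tendsto (fun t : ℝ => f (T t x)) (𝓝[>] 0) (𝓝 (f x))) :
    ∀ x : X, Tendsto (fun t : ℝ => T t x) (𝓝[>] 0) (𝓝 x) := by
  intro x
  have hmeas : StronglyMeasurable (orbit T x) :=
    stronglyMeasurable_of_continuousWithinAt_Ici_dual
      (continuousWithinAt_Ici_dual_orbit hTadd hweak · x)
  have hint := intervalIntegrable_orbit hbdd hmeas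
  obtain ⟨C, hC⟩ := hbdd 1
  have hclosed : IsClosed (strongContinuitySubmodule T : Set X) :=
    isClosed_strongContinuitySubmodule <|
      mem_of_superset (Ioo_mem_nhdsGT zero_lt_one) fun t ht => hC t ⟨ht.1.le, ht.2.le⟩
  have hx : x ∈ closure (strongContinuitySubmodule T : Set X) :=
    (Submodule.convex _).mem_closure_of_forall_tendsto_dual (l := 𝓝[>] 0)
      (eventually_nhdsWithin_of_forall fun r hr =>
        orbitAverage_mem_strongContinuitySubmodule hTadd hint (mem_Ioi.1 hr).le)
      (tendsto_dual_orbitAverage (hweak x) hmeas hint)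
  rw [hclosed.closure_eq] at hx
  exact hx

/-- Yosida's theorem: an operator semigroup on a Banach space, locally uniformly bounded
in norm, which is weakly continuous at `t = 0⁺`, is strongly continuous at `t = 0⁺`,
i.e. it is a C0-semigroup. -/
theorem stmt2 {X : Type*} [NormedAddCommGroup X] [NormedSpace ℝ X] [CompleteSpace X]
    (T : ℝ → X →L[ℝ] X)
    (hT0 : T 0 = 1)
    (hTadd : ∀ s t : ℝ, 0 ≤ s → 0 ≤ t → T (s + t) = (T s).comp (T t))
    (hbdd : ∀ b : ℝ, ∃ C : ℝ, ∀ t ∈ Set.Icc (0 : ℝ) b, ‖T t‖ ≤ C)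
    (hweak : ∀ x : X, ∀ f : X →L[ℝ] ℝ,
        Tendsto (fun t : ℝ => f (T t x)) (𝓝[>] 0) (𝓝 (f x))) :
    ∀ x : X, Tendsto (fun t : ℝ => T t x) (𝓝[>] 0) (𝓝 x) :=
  stmt2_general T hTadd hbdd hweak
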